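/- arXiv:2509.02584 — 4 statements merged into one kernel-verified Lean document; each statement's English description precedes it below -/
import Mathlib

section
/- Let R be a generalized p.q.-Baer *-ring. Then for every x ∈ R there exists n ∈ ℕ such that r((xR)^n) ∩ (x*)^n R = {0}. -/
variable {R : Type*} [Ring R] [StarRing R]

/-- A projection in a `*`-ring: a self-adjoint idempotent. -/
def IsProj (e : R) : Prop := e * e = e ∧ star e = e

/-- A central element. -/
def IsCentral (e : R) : Prop := ∀ r : R, e * r = r * e

/-- The order on projections: `e ≤ f` iff `e = e * f`. -/
def projLE (e f : R) : Prop := e * f = e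

/-- `chain x n f = (x * f 0) * (x * f 1) * ⋯ * (x * f n)`, a typical generator of `(xR)^(n+1)`. -/
def chain (x : R) : ℕ → (ℕ → R) → R
  | 0, f => x * f 0
  | n + 1, f => chain x n f * (x * f (n + 1))

/-- The right annihilator of `(xR)^(n+1)`. -/
def rAnnPow (x : R) (n : ℕ) : Set R := {a : R | ∀ f : ℕ → R, chain x n f * a = 0}

/-- The right annihilator of `xR`. -/
def rAnnP (x : R) : Set R := rAnnPow x 0

/-- The right ideal `eR`. -/
def rIdeal (e : R) : Set R := {y : R | ∃ r : R, y = e * r}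

/-- A p.q.-Baer `*`-ring: the right annihilator of every principal ideal is generated by a
projection. -/
def IsPQBaerStar (S : Type*) [Ring S] [StarRing S] : Prop :=
  ∀ x : S, ∃ e : S, IsProj e ∧ rAnnP x = rIdeal e

/-- A generalized p.q.-Baer `*`-ring: for every `x` there are `n ≥ 1` and a projection `e`
with `r((xR)^n) = eR`. -/
def IsGenPQBaerStar (S : Type*) [Ring S] [StarRing S] : Prop :=
  ∀ x : S, ∃ (n : ℕ) (e : S), IsProj e ∧ rAnnPow x n = rIdeal e

/-- `h` is the central cover of `x`: the smallest central projection with `h * x = x`. -/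
def IsCentralCover (x h : R) : Prop :=
  IsProj h ∧ IsCentral h ∧ h * x = x ∧
    ∀ k : R, IsProj k → IsCentral k → k * x = x → projLE h k

/-- `e` is the generalized central cover of `x`: the smallest central projection with
`x ^ n * e = x ^ n` for some `n ≥ 1`. -/
def IsGenCentralCover (x e : R) : Prop :=
  IsProj e ∧ IsCentral e ∧ (∃ n : ℕ, x ^ (n + 1) * e = x ^ (n + 1)) ∧
    ∀ k : R, IsProj k → IsCentral k → (∃ n : ℕ, x ^ (n + 1) * k = x ^ (n + 1)) → projLE e k

/-- Murray–von Neumann style equivalence of projections. -/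
def ProjEquiv (p q : R) : Prop := ∃ w : R, star w * w = p ∧ w * star w = q

lemma chain_one (x : R) (n : ℕ) : chain x n (fun _ => (1 : R)) = x ^ (n + 1) := by
  induction n with
  | zero => simp [chain]
  | succ m ih => rw [chain, ih, mul_one, ← pow_succ]

/-- in a generalized p.q.-Baer `*`-ring, for every `x` there is `n` with
`r((xR)^n) ∩ (x*)^n R = {0}`. -/
theorem stmt2 (h : IsGenPQBaerStar R) (x : R) :
    ∃ n : ℕ, rAnnPow x n ∩ rIdeal ((star x) ^ (n + 1)) = {0} := by
  obtain ⟨n, e, ⟨hee, hse⟩, hEq⟩ := h x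
  refine ⟨n, ?_⟩
  have hchain := chain_one x n
  have heAnn : (e : R) ∈ rAnnPow x n := by
    rw [hEq]; exact ⟨1, by rw [mul_one]⟩
  have hxe : x ^ (n + 1) * e = 0 := by
    have := heAnn (fun _ => (1 : R)); rwa [hchain] at this
  ext a
  simp only [Set.mem_inter_iff, Set.mem_singleton_iff]
  constructor
  · rintro ⟨haAnn, s, hs⟩
    obtain ⟨r, hr⟩ := hEq ▸ haAnn
    have hea : e * a = a := by rw [hr, ← mul_assoc, hee]
    have hestar : e * (star x) ^ (n + 1) = 0 := by
      have : star (x ^ (n + 1) * e) = 0 := by rw [hxe, star_zero]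
      rwa [star_mul, hse, star_pow] at this
    calc a = e * a := hea.symm
      _ = e * ((star x) ^ (n + 1) * s) := by rw [← hs]
      _ = 0 := by rw [← mul_assoc, hestar, zero_mul]
  · rintro rfl
    exact ⟨fun f => mul_zero _, 0, by rw [mul_zero]⟩
end

section
/- Let R be a commutative generalized p.q.-Baer *-ring. Then (1) GC(x) = GC(x*) for every x ∈ R, and (2) if (xR)^n y = 0 for some n ∈ ℕ, then GC(x)·GC(y) = 0. -/
variable {R : Type*} [Ring R] [StarRing R]

section Aux

variable {S : Type*} [CommRing S] [StarRing S]

lemma chain_eq (x : S) (n : ℕ) (f : ℕ → S) :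
    chain x n f = x ^ (n + 1) * ∏ i ∈ Finset.range (n + 1), f i := by
  induction n with
  | zero => simp [chain]
  | succ n ih =>
    rw [chain, ih, Finset.prod_range_succ f (n + 1)]
    ring

lemma mem_rAnnPow {x a : S} {n : ℕ} : a ∈ rAnnPow x n ↔ x ^ (n + 1) * a = 0 := by
  constructor
  · intro ha
    have := ha (fun _ => 1)
    simpa [chain_eq] using this
  · intro ha f
    rw [chain_eq, mul_comm (x ^ (n + 1)), mul_assoc, ha, mul_zero]

/-- If `r((xR)^(N+1)) = eR` with `e` a projection, then annihilating a higher power of `x`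
already implies annihilating `x^(N+1)`. -/
lemma ann_descend {x e : S} {N : ℕ} (hpe : IsProj e) (he : rAnnPow x N = rIdeal e) :
    ∀ M a, x ^ (N + 1 + M) * a = 0 → x ^ (N + 1) * a = 0 := by
  have heann : x ^ (N + 1) * e = 0 := by
    have : e ∈ rAnnPow x N := by rw [he]; exact ⟨e, hpe.1.symm⟩
    exact mem_rAnnPow.mp this
  intro M
  induction M using Nat.strong_induction_on with
  | _ M ih =>
    intro a ha
    rcases Nat.eq_zero_or_pos M with rfl | hMpos
    · simpa using ha
    · -- x^(N+1) * (x^M * a) = 0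
      have h1 : x ^ (N + 1) * (x ^ M * a) = 0 := by
        rw [← mul_assoc, ← pow_add]; exact ha
      have h2 : x ^ M * a ∈ rIdeal e := by rw [← he]; exact mem_rAnnPow.mpr h1
      obtain ⟨r, hr⟩ := h2
      have h3 : e * (x ^ M * a) = x ^ M * a := by rw [hr, ← mul_assoc, hpe.1]
      have h4 : x ^ M * ((1 - e) * a) = 0 := by linear_combination -h3
      have h5 : x ^ (N + 1) * ((1 - e) * a) = 0 := by
        rcases le_or_gt M (N + 1) with hle | hlt
        · have hsp : x ^ (N + 1) = x ^ (N + 1 - M) * x ^ M := by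
            rw [← pow_add]; congr 1; omega
          rw [hsp, mul_assoc, h4, mul_zero]
        · have hMN : M - (N + 1) < M := by omega
          apply ih (M - (N + 1)) hMN
          calc x ^ (N + 1 + (M - (N + 1))) * ((1 - e) * a)
              = x ^ M * ((1 - e) * a) := by congr 2; omega
            _ = 0 := h4
      calc x ^ (N + 1) * a
          = x ^ (N + 1) * ((1 - e) * a) + (x ^ (N + 1) * e) * a := by ring
        _ = 0 := by rw [h5, heann, zero_mul, add_zero]

end Aux

/-- in a commutative generalized p.q.-Baer `*`-ring, `GC(x) = GC(x*)` and
`(xR)^n y = 0` implies `GC(x) · GC(y) = 0`. -/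
theorem stmt8 {S : Type*} [CommRing S] [StarRing S] (h : IsGenPQBaerStar S) :
    (∀ x gx gxs : S, IsGenCentralCover x gx → IsGenCentralCover (star x) gxs → gx = gxs) ∧
    (∀ x y gx gy : S, IsGenCentralCover x gx → IsGenCentralCover y gy →
      (∃ n : ℕ, ∀ f : ℕ → S, chain x n f * y = 0) → gx * gy = 0) := by
  constructor
  · -- GC(x) = GC(x*)
    rintro x gx gxs ⟨hpx, hcx, ⟨n, hn⟩, hminx⟩ ⟨hpxs, hcxs, ⟨m, hm⟩, hminxs⟩
    have h1 : projLE gxs gx := by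
      apply hminxs gx hpx hcx
      refine ⟨n, ?_⟩
      have := congrArg star hn
      simpa [star_mul, star_pow, hpx.2, mul_comm] using this
    have h2 : projLE gx gxs := by
      apply hminx gxs hpxs hcxs
      refine ⟨m, ?_⟩
      have := congrArg star hm
      simpa [star_mul, star_pow, hpxs.2, mul_comm] using this
    calc gx = gx * gxs := h2.symm
      _ = gxs * gx := mul_comm _ _
      _ = gxs := h1
  · rintro x y gx gy ⟨hpx, hcx, hex, hminx⟩ ⟨hpy, hcy, hey, hminy⟩ ⟨n, hn⟩
    obtain ⟨N, e, hpe, he⟩ := h x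
    -- x^(N+1) * e = 0
    have heann : x ^ (N + 1) * e = 0 := by
      have : e ∈ rAnnPow x N := by
        rw [he]; exact ⟨e, hpe.1.symm⟩
      exact mem_rAnnPow.mp this
    -- x^(n+1) * y = 0
    have hxy : x ^ (n + 1) * y = 0 := mem_rAnnPow.mp hn
    -- x^(N+1) * y = 0
    have hxNy : x ^ (N + 1) * y = 0 := by
      rcases le_or_gt n N with hle | hlt
      · calc x ^ (N + 1) * y = x ^ (N - n) * (x ^ (n + 1) * y) := by
              rw [← mul_assoc, ← pow_add]
              congr 2
              omega
          _ = 0 := by rw [hxy, mul_zero]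
      · refine ann_descend hpe he (n - N) y ?_
        calc x ^ (N + 1 + (n - N)) * y = x ^ (n + 1) * y := by
              congr 2; omega
          _ = 0 := hxy
    -- y = e * y in the sense y ∈ eR, hence e * y = y
    have hy_mem : y ∈ rIdeal e := by rw [← he]; exact mem_rAnnPow.mpr hxNy
    obtain ⟨r, hr⟩ := hy_mem
    have hey' : e * y = y := by rw [hr, ← mul_assoc, hpe.1]
    -- gx * e = 0
    have hgxe : gx * e = 0 := by
      have hproj : IsProj (1 - e) := by
        constructor
        · linear_combination hpe.1
        · simp [hpe.2]
      have hcent : IsCentral (1 - e) := fun r => mul_comm _ _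
      have hle : projLE gx (1 - e) := by
        apply hminx (1 - e) hproj hcent
        refine ⟨N, ?_⟩
        rw [mul_sub, mul_one, heann, sub_zero]
      have := hle
      unfold projLE at this
      linear_combination -this
    -- y * gx = 0
    have hygx : y * gx = 0 := by
      calc y * gx = (e * y) * gx := by rw [hey']
        _ = y * (gx * e) := by ring
        _ = 0 := by rw [hgxe, mul_zero]
    -- gy ≤ 1 - gx
    have hproj' : IsProj (1 - gx) := by
      constructor
      · linear_combination hpx.1
      · simp [hpx.2]
    have hcent' : IsCentral (1 - gx) := fun r => mul_comm _ _
    have hle' : projLE gy (1 - gx) := by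
      apply hminy (1 - gx) hproj' hcent'
      refine ⟨0, ?_⟩
      simp only [mul_sub, mul_one, pow_one]
      linear_combination -hygx
    unfold projLE at hle'
    calc gx * gy = gy * gx := mul_comm _ _
      _ = 0 := by linear_combination -hle'
end

section
/- A generalized p.q.-Baer *-ring R satisfies the parallelogram law (e − e∧f ~ e∨f − f for all projections e, f) if and only if whenever projections e and f are in position p′, one has e ~ f. -/
variable {R : Type*} [Ring R] [StarRing R]

/-- `m` is the meet of projections `e, f`. -/
def IsMeetProj (e f m : R) : Prop :=
  IsProj m ∧ projLE m e ∧ projLE m f ∧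
    ∀ k : R, IsProj k → projLE k e → projLE k f → projLE k m

/-- `j` is the join of projections `e, f`. -/
def IsJoinProj (e f j : R) : Prop :=
  IsProj j ∧ projLE e j ∧ projLE f j ∧
    ∀ k : R, IsProj k → projLE e k → projLE f k → projLE j k

/-- Projections `e, f` are in position `p'`: `e ∧ (1-f) = 0` and `(1-e) ∧ f = 0`. -/
def PositionPPrime (e f : R) : Prop := IsMeetProj e (1 - f) 0 ∧ IsMeetProj (1 - e) f 0

private lemma sa_flip {p q x : R} (hp : star p = p) (hq : star q = q)
    (h : p * q = x) : q * p = star x := by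
  have := congrArg star h
  rwa [star_mul, hp, hq] at this

private lemma proj_one_sub {e : R} (he : IsProj e) : IsProj (1 - e) := by
  constructor
  · have h : (1 - e) * (1 - e) = 1 - e - e + e * e := by noncomm_ring
    rw [h, he.1]; abel
  · simp [he.2]

private lemma proj_sub {m e : R} (hm : IsProj m) (he : IsProj e) (h : m * e = m) :
    IsProj (e - m) := by
  have h' : e * m = m := by
    have := sa_flip hm.2 he.2 h; rwa [hm.2] at this
  constructor
  · have := he.1; have := hm.1
    calc (e - m) * (e - m) = e * e - e * m - (m * e - m * m) := by noncomm_ring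
    _ = e - m := by rw [he.1, hm.1, h, h']; noncomm_ring
  · simp [he.2, hm.2]

/-- a generalized p.q.-Baer `*`-ring satisfies the parallelogram law iff
projections in position `p'` are equivalent. -/
theorem stmt13 (hR : IsGenPQBaerStar R) :
    (∀ e f m j : R, IsProj e → IsProj f → IsMeetProj e f m → IsJoinProj e f j →
      ProjEquiv (e - m) (j - f)) ↔
    (∀ e f : R, IsProj e → IsProj f → PositionPPrime e f → ProjEquiv e f) := by
  constructor
  · -- parallelogram law ⇒ position p' implies equivalence
    intro hpar e f he hf ⟨h1, h2⟩
    have hjoin : IsJoinProj e (1 - f) 1 := by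
      refine ⟨⟨by simp, by simp⟩, by simp [projLE], by simp [projLE], ?_⟩
      intro k hk hek hfk
      -- show k = 1 using the meet (1-e) ∧ f = 0
      have hke : k * e = e := by
        have := sa_flip he.2 hk.2 hek; rwa [he.2] at this
      have hkf : k * f = k - 1 + f := by
        have := sa_flip (proj_one_sub hf).2 hk.2 hfk
        have h2' : star (1 - f : R) = 1 - f := by simp [hf.2]
        rw [h2'] at this
        -- this : k * (1 - f) = 1 - f
        have h3 : k - k * f = 1 - f := by
          rwa [mul_sub, mul_one] at this
        linear_combination (norm := abel) -h3
      have hkle : (1 - k) * (1 - e) = 1 - k := by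
        have : (1 - k) * (1 - e) = 1 - e - k + k * e := by noncomm_ring
        rw [this, hke]; abel
      have hklf : (1 - k) * f = 1 - k := by
        have : (1 - k) * f = f - k * f := by noncomm_ring
        rw [this, hkf]; abel
      have := h2.2.2.2 (1 - k) (proj_one_sub hk) hkle hklf
      -- this : (1 - k) * 0 = 1 - k
      unfold projLE at this ⊢
      rw [mul_zero] at this
      have hk1 : k = 1 := (sub_eq_zero.mp this.symm).symm
      rw [hk1, one_mul]
    have := hpar e (1 - f) 0 1 he (proj_one_sub hf) h1 hjoin
    simpa using this
  · -- position p' equivalence ⇒ parallelogram law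
    intro hpos e f m j he hf hm hj
    obtain ⟨hmp, hme, hmf, hmmin⟩ := hm
    obtain ⟨hjp, hej, hfj, hjmin⟩ := hj
    unfold projLE at hme hmf hej hfj
    have hem : e * m = m := by have := sa_flip hmp.2 he.2 hme; rwa [hmp.2] at this
    have hfm : f * m = m := by have := sa_flip hmp.2 hf.2 hmf; rwa [hmp.2] at this
    have hje : j * e = e := by have := sa_flip he.2 hjp.2 hej; rwa [he.2] at this
    have hjf : j * f = f := by have := sa_flip hf.2 hjp.2 hfj; rwa [hf.2] at this
    have hpem : IsProj (e - m) := proj_sub hmp he hme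
    have hpjf : IsProj (j - f) := proj_sub hf hjp hfj
    -- position p' of (e - m) and (j - f)
    have meet1 : IsMeetProj (e - m) (1 - (j - f)) 0 := by
      refine ⟨⟨by simp, by simp⟩, by simp [projLE], by simp [projLE], ?_⟩
      intro k hk hk1 hk2
      unfold projLE at hk1 hk2 ⊢
      have hkm : k * m = 0 := by
        have : k * (e - m) * m = k * m := by rw [hk1]
        calc k * m = k * (e - m) * m := this.symm
        _ = k * (e * m - m * m) := by noncomm_ring
        _ = 0 := by rw [hem, hmp.1]; simp
      have hke : k * e = k := by
        have : k * (e - m) * e = k * e := by rw [hk1]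
        calc k * e = k * (e * e - m * e) := by rw [← this]; noncomm_ring
        _ = k * (e - m) := by rw [he.1, hme]
        _ = k := hk1
      have hkj : k * j = k := by
        calc k * j = k * e * j := by rw [hke]
        _ = k * (e * j) := by rw [mul_assoc]
        _ = k := by rw [hej, hke]
      have hkf : k * f = k := by
        have : k * (1 - (j - f)) = k - k * j + k * f := by noncomm_ring
        rw [hk2, hkj] at this
        linear_combination (norm := abel) -this
      have := hmmin k hk hke hkf
      unfold projLE at this
      rw [mul_zero]
      rw [← this, hkm]
    have meet2 : IsMeetProj (1 - (e - m)) (j - f) 0 := by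
      refine ⟨⟨by simp, by simp⟩, by simp [projLE], by simp [projLE], ?_⟩
      intro k hk hk1 hk2
      unfold projLE at hk1 hk2 ⊢
      have hkf : k * f = 0 := by
        have : k * (j - f) * f = k * f := by rw [hk2]
        calc k * f = k * (j * f - f * f) := by rw [← this]; noncomm_ring
        _ = 0 := by rw [hjf, hf.1]; simp
      have hkj : k * j = k := by
        have : k * (j - f) * j = k * j := by rw [hk2]
        calc k * j = k * (j * j - f * j) := by rw [← this]; noncomm_ring
        _ = k * (j - f) := by rw [hjp.1, hfj]
        _ = k := hk2
      have hkm : k * m = 0 := by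
        calc k * m = k * (f * m) := by rw [hfm]
        _ = k * f * m := by rw [mul_assoc]
        _ = 0 := by rw [hkf, zero_mul]
      have hke : k * e = 0 := by
        have : k * (1 - (e - m)) = k - k * e + k * m := by noncomm_ring
        rw [hk1, hkm, add_zero] at this
        exact sub_eq_self.mp this.symm
      have hek : e * k = 0 := by
        have := sa_flip hk.2 he.2 hke; rwa [star_zero] at this
      have hfk : f * k = 0 := by
        have := sa_flip hk.2 hf.2 hkf; rwa [star_zero] at this
      have hle : e * (1 - k) = e := by rw [mul_sub, mul_one, hek, sub_zero]
      have hlf : f * (1 - k) = f := by rw [mul_sub, mul_one, hfk, sub_zero]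
      have := hjmin (1 - k) (proj_one_sub hk) hle hlf
      unfold projLE at this
      -- this : j * (1 - k) = j
      have hjk : j * k = 0 := by
        have : j * k = j * 1 - j * (1 - k) := by noncomm_ring
        rw [this, mul_one]
        rw [hjmin (1 - k) (proj_one_sub hk) hle hlf]
        exact sub_self j
      have hkj0 : k * j = 0 := by
        have := sa_flip hjp.2 hk.2 hjk; rwa [star_zero] at this
      rw [mul_zero, ← hkj, hkj0]
    exact hpos (e - m) (j - f) hpem hpjf ⟨meet1, meet2⟩
end

section
/- Let R be a generalized p.q.-Baer *-ring and b, c ∈ R. Then there exist m, n ∈ ℕ such that GC(b^n + c^m) ≤ GC(b) ∨ GC(c) and GC(b^n c^m) ≤ GC(b) ∧ GC(c), where for central projections e, f one sets e∨f = e+f−ef and e∧f = ef. -/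
variable {R : Type*} [Ring R] [StarRing R]

/-- `GC(b^n + c^m) ≤ GC(b) ∨ GC(c)` and `GC(b^n c^m) ≤ GC(b) ∧ GC(c)` for
suitable `m, n`, where for central projections `e∨f = e + f - ef` and `e∧f = ef`. -/
theorem stmt17 (hR : IsGenPQBaerStar R) (b c gb gc : R)
    (hgb : IsGenCentralCover b gb) (hgc : IsGenCentralCover c gc) :
    ∃ m n : ℕ,
      (∀ g : R, IsGenCentralCover (b ^ (n + 1) + c ^ (m + 1)) g →
        projLE g (gb + gc - gb * gc)) ∧
      (∀ g : R, IsGenCentralCover (b ^ (n + 1) * c ^ (m + 1)) g → projLE g (gb * gc)) := by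
  obtain ⟨⟨hgb1, hgb2⟩, hgbC, ⟨N, hN⟩, _⟩ := hgb
  obtain ⟨⟨hgc1, hgc2⟩, hgcC, ⟨M, hM⟩, _⟩ := hgc
  have hcomm : gb * gc = gc * gb := hgbC gc
  -- gb * gc is a central projection
  have pmul : IsProj (gb * gc) := by
    constructor
    · calc gb * gc * (gb * gc) = gb * (gc * gb) * gc := by noncomm_ring
        _ = gb * (gb * gc) * gc := by rw [← hcomm]
        _ = (gb * gb) * (gc * gc) := by noncomm_ring
        _ = gb * gc := by rw [hgb1, hgc1]
    · rw [star_mul, hgb2, hgc2, hcomm]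
  have cmul : IsCentral (gb * gc) := by
    intro r
    calc gb * gc * r = gb * (gc * r) := by rw [mul_assoc]
      _ = gb * (r * gc) := by rw [hgcC r]
      _ = (gb * r) * gc := by rw [mul_assoc]
      _ = (r * gb) * gc := by rw [hgbC r]
      _ = r * (gb * gc) := by rw [mul_assoc]
  have e1 : gb * (gb * gc) = gb * gc := by rw [← mul_assoc, hgb1]
  have e2 : gc * (gb * gc) = gb * gc := by
    rw [← mul_assoc, ← hcomm, mul_assoc, hgc1]
  have e3 : gb * gc * gb = gb * gc := by
    rw [mul_assoc, ← hcomm, ← mul_assoc, hgb1]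
  have e4 : gb * gc * gc = gb * gc := by rw [mul_assoc, hgc1]
  -- the sup is a central projection
  have psup : IsProj (gb + gc - gb * gc) := by
    constructor
    · have expand : (gb + gc - gb * gc) * (gb + gc - gb * gc) =
          (gb * gb + gb * gc - gb * (gb * gc)) + (gc * gb + gc * gc - gc * (gb * gc))
            - (gb * gc * gb + gb * gc * gc - gb * gc * (gb * gc)) := by noncomm_ring
      rw [expand, e1, e2, e3, e4, pmul.1, hgb1, hgc1, ← hcomm]
      abel
    · rw [star_sub, star_add, star_mul, hgb2, hgc2, hcomm]
  have csup : IsCentral (gb + gc - gb * gc) := by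
    intro r
    simp only [sub_mul, add_mul, mul_sub, mul_add, hgbC r, hgcC r, cmul r]
  have h1 : gb * (gb + gc - gb * gc) = gb := by
    rw [mul_sub, mul_add, hgb1, e1]; abel
  have h2 : gc * (gb + gc - gb * gc) = gc := by
    rw [mul_sub, mul_add, hgc1, e2, ← hcomm]; abel
  have hb : b ^ (N + 1) * (gb + gc - gb * gc) = b ^ (N + 1) := by
    calc b ^ (N + 1) * (gb + gc - gb * gc)
        = (b ^ (N + 1) * gb) * (gb + gc - gb * gc) := by rw [hN]
      _ = b ^ (N + 1) * (gb * (gb + gc - gb * gc)) := by rw [mul_assoc]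
      _ = b ^ (N + 1) * gb := by rw [h1]
      _ = b ^ (N + 1) := hN
  have hc : c ^ (M + 1) * (gb + gc - gb * gc) = c ^ (M + 1) := by
    calc c ^ (M + 1) * (gb + gc - gb * gc)
        = (c ^ (M + 1) * gc) * (gb + gc - gb * gc) := by rw [hM]
      _ = c ^ (M + 1) * (gc * (gb + gc - gb * gc)) := by rw [mul_assoc]
      _ = c ^ (M + 1) * gc := by rw [h2]
      _ = c ^ (M + 1) := hM
  refine ⟨M, N, ?_, ?_⟩
  · intro g hg
    refine hg.2.2.2 _ psup csup ⟨0, ?_⟩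
    rw [pow_one, add_mul, hb, hc]
  · intro g hg
    refine hg.2.2.2 _ pmul cmul ⟨0, ?_⟩
    rw [pow_one]
    calc b ^ (N + 1) * c ^ (M + 1) * (gb * gc)
        = b ^ (N + 1) * ((c ^ (M + 1) * gb) * gc) := by
          simp only [mul_assoc]
      _ = b ^ (N + 1) * ((gb * c ^ (M + 1)) * gc) := by rw [← hgbC (c ^ (M + 1))]
      _ = (b ^ (N + 1) * gb) * (c ^ (M + 1) * gc) := by
          rw [mul_assoc, mul_assoc]
      _ = b ^ (N + 1) * c ^ (M + 1) := by rw [hN, hM]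
end
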